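/- If S ≤ P_n is a stabilizer group, then the normalizer N(S) = {p ∈ P_n : pSp⁻¹ = S} of S in P_n equals the centralizer C(S) = {p ∈ P_n : ps = sp for all s ∈ S} of S in P_n. -/

import Mathlib

open Matrix

noncomputable section

/-- The space of operators on `ι`-many qubits: matrices whose rows and columns are
indexed by bit strings `ι → Fin 2`, with complex entries. -/
abbrev PMat (ι : Type) [Fintype ι] [DecidableEq ι] : Type :=
  Matrix (ι → Fin 2) (ι → Fin 2) ℂ

variable (ι : Type) [Fintype ι] [DecidableEq ι]

lemma fin2_add_one_add_one : ∀ a : Fin 2, a + 1 + 1 = a := by decide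

/-- The matrix of the operator `X k`, which flips the `k`-th bit of a basis state. -/
def XMat (k : ι) : PMat ι :=
  Matrix.of fun x y => if y = Function.update x k (x k + 1) then (1 : ℂ) else 0

/-- The matrix of the operator `Z k`, which multiplies the basis state `x` by `(-1) ^ (x k)`. -/
def ZMat (k : ι) : PMat ι :=
  Matrix.diagonal fun x => (-1 : ℂ) ^ (x k : ℕ)

lemma XMat_mul_self (k : ι) : XMat ι k * XMat ι k = 1 := by
  have hinv : ∀ x : ι → Fin 2,
      Function.update (Function.update x k (x k + 1)) k
        (Function.update x k (x k + 1) k + 1) = x := by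
    intro x
    ext j
    rcases eq_or_ne j k with rfl | h
    · simp [fin2_add_one_add_one]
    · simp [Function.update_of_ne h]
  ext x z
  rw [Matrix.mul_apply]
  simp only [XMat, Matrix.of_apply, ite_mul, one_mul, zero_mul]
  rw [Finset.sum_ite_eq' Finset.univ (Function.update x k (x k + 1))
    (fun y => if z = Function.update y k (y k + 1) then (1 : ℂ) else 0)]
  simp [Matrix.one_apply, fin2_add_one_add_one, Function.update_eq_self, eq_comm]

lemma ZMat_mul_self (k : ι) : ZMat ι k * ZMat ι k = 1 := by
  have h : (fun i : ι → Fin 2 => (-1 : ℂ) ^ (i k : ℕ) * (-1) ^ (i k : ℕ)) = fun _ => 1 := by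
    funext x
    rw [← pow_add, ← two_mul, pow_mul, neg_one_sq, one_pow]
  rw [ZMat, Matrix.diagonal_mul_diagonal, h, Matrix.diagonal_one]

lemma iMat_mul : (Complex.I • (1 : PMat ι)) * ((-Complex.I) • (1 : PMat ι)) = 1 := by
  rw [smul_mul_smul_comm]
  simp [Complex.I_mul_I]

lemma iMat_mul' : ((-Complex.I) • (1 : PMat ι)) * (Complex.I • (1 : PMat ι)) = 1 := by
  rw [smul_mul_smul_comm]
  simp [Complex.I_mul_I]

/-- The scalar `i·I`, as a unit. -/
def iU : (PMat ι)ˣ := ⟨Complex.I • 1, (-Complex.I) • 1, iMat_mul ι, iMat_mul' ι⟩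

/-- The operator `X k`, as a unit. -/
def XU (k : ι) : (PMat ι)ˣ := ⟨XMat ι k, XMat ι k, XMat_mul_self ι k, XMat_mul_self ι k⟩

/-- The operator `Z k`, as a unit. -/
def ZU (k : ι) : (PMat ι)ˣ := ⟨ZMat ι k, ZMat ι k, ZMat_mul_self ι k, ZMat_mul_self ι k⟩

/-- The Pauli group on the qubits indexed by `ι`: the subgroup of invertible operators
generated by `i·I` and the `X k` and `Z k`. -/
def PauliGroup : Subgroup (PMat ι)ˣ :=
  Subgroup.closure ({iU ι} ∪ Set.range (XU ι) ∪ Set.range (ZU ι))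

/-- The phase-free "almost Pauli group" `⟨X 1, Z 1, …, X n, Z n⟩`. -/
def PauliGroupNP : Subgroup (PMat ι)ˣ :=
  Subgroup.closure (Set.range (XU ι) ∪ Set.range (ZU ι))

lemma iU_mem : iU ι ∈ PauliGroup ι :=
  Subgroup.subset_closure (Or.inl (Or.inl rfl))

lemma XU_mem (k : ι) : XU ι k ∈ PauliGroup ι :=
  Subgroup.subset_closure (Or.inl (Or.inr ⟨k, rfl⟩))

lemma ZU_mem (k : ι) : ZU ι k ∈ PauliGroup ι :=
  Subgroup.subset_closure (Or.inr ⟨k, rfl⟩)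

lemma XU_memNP (k : ι) : XU ι k ∈ PauliGroupNP ι :=
  Subgroup.subset_closure (Or.inl ⟨k, rfl⟩)

lemma ZU_memNP (k : ι) : ZU ι k ∈ PauliGroupNP ι :=
  Subgroup.subset_closure (Or.inr ⟨k, rfl⟩)

/-- A stabilizer group: a subgroup of the Pauli group not containing `-I`. -/
structure IsStabilizer (S : Subgroup (PMat ι)ˣ) : Prop where
  le : S ≤ PauliGroup ι
  neg_one_notMem : (-1 : (PMat ι)ˣ) ∉ S

/-- A subgroup has rank `r` if it admits a generating set of size `r` and no smaller one. -/
def HasRank {G : Type*} [Group G] (S : Subgroup G) (r : ℕ) : Prop :=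
  (∃ T : Finset G, Subgroup.closure (T : Set G) = S ∧ T.card = r) ∧
    ∀ T : Finset G, Subgroup.closure (T : Set G) = S → r ≤ T.card

/-- The normalizer `N(S) = {p ∈ P_n : p S p⁻¹ = S}` of `S` in the Pauli group. -/
def NormIn (S : Subgroup (PMat ι)ˣ) : Subgroup (PMat ι)ˣ :=
  Subgroup.normalizer (S : Set (PMat ι)ˣ) ⊓ PauliGroup ι

/-- The centralizer `C(S) = {p ∈ P_n : ∀ s ∈ S, p s = s p}` of `S` in the Pauli group. -/
def CentIn (S : Subgroup (PMat ι)ˣ) : Subgroup (PMat ι)ˣ :=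
  Subgroup.centralizer (S : Set (PMat ι)ˣ) ⊓ PauliGroup ι

instance normIn_normal (S : Subgroup (PMat ι)ˣ) : (S.subgroupOf (NormIn ι S)).Normal := by
  constructor
  intro x hx g
  rw [Subgroup.mem_subgroupOf] at hx ⊢
  have hg : (g : (PMat ι)ˣ) ∈ Subgroup.normalizer (S : Set (PMat ι)ˣ) := (Subgroup.mem_inf.mp g.2).1
  have h := (Subgroup.mem_normalizer_iff.mp hg (x : (PMat ι)ˣ)).mp hx
  simpa using h

/-- The logical Pauli group `N(S)/S`. -/
abbrev LogicalGroup (S : Subgroup (PMat ι)ˣ) :=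
  ↥(NormIn ι S) ⧸ S.subgroupOf (NormIn ι S)

/-- A Pauli is Hermitian if its matrix equals its conjugate transpose. -/
def IsHermitianPauli (p : (PMat ι)ˣ) : Prop := (p : PMat ι).IsHermitian

/-- The weight of a Pauli: the number of qubits on which it acts non-trivially,
i.e. on which it fails to commute with `X k` or with `Z k`. -/
def weight (p : (PMat ι)ˣ) : ℕ :=
  Nat.card {k : ι // ¬(Commute p (XU ι k) ∧ Commute p (ZU ι k))}

/-- The effect on a stabilizer group of measuring the Hermitian Pauli `p`,
post-selecting the outcome `+1`: `S ↦ ⟨p⟩·(S ∩ C(p))`. -/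
def measUpdate (p : (PMat ι)ˣ) (S : Subgroup (PMat ι)ˣ) : Subgroup (PMat ι)ˣ :=
  Subgroup.closure {p} ⊔ (S ⊓ Subgroup.centralizer {p})

lemma iU_central (A : (PMat ι)ˣ) : iU ι * A = A * iU ι := by
  apply Units.ext
  show (Complex.I • (1 : PMat ι)) * (A : PMat ι) = (A : PMat ι) * (Complex.I • 1)
  rw [smul_mul_assoc, one_mul, mul_smul_comm, mul_one]

lemma iU_mem_normIn (S : Subgroup (PMat ι)ˣ) : iU ι ∈ NormIn ι S := by
  refine Subgroup.mem_inf.mpr ⟨?_, iU_mem ι⟩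
  rw [Subgroup.mem_normalizer_iff]
  intro h
  have : iU ι * h * (iU ι)⁻¹ = h := by
    rw [iU_central ι h, mul_assoc, mul_inv_cancel, mul_one]
  rw [this]


lemma XMat_comm (j k : ι) : XMat ι j * XMat ι k = XMat ι k * XMat ι j := by
  rcases eq_or_ne j k with rfl | h
  · rfl
  have key : ∀ a b : ι, a ≠ b → XMat ι a * XMat ι b =
      Matrix.of fun x z => if z = Function.update (Function.update x a (x a + 1)) b (x b + 1)
        then (1 : ℂ) else 0 := by
    intro a b hab
    ext x z
    rw [Matrix.mul_apply]
    simp only [XMat, Matrix.of_apply, ite_mul, one_mul, zero_mul]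
    rw [Finset.sum_ite_eq' Finset.univ (Function.update x a (x a + 1))
      (fun y => if z = Function.update y b (y b + 1) then (1 : ℂ) else 0)]
    simp [Function.update_of_ne hab.symm]
  rw [key j k h, key k j h.symm]
  ext x z
  simp only [Matrix.of_apply]
  rw [Function.update_comm h]

lemma ZMat_comm (j k : ι) : ZMat ι j * ZMat ι k = ZMat ι k * ZMat ι j := by
  simp only [ZMat, Matrix.diagonal_mul_diagonal]
  exact congrArg Matrix.diagonal (funext fun i => mul_comm _ _)

lemma XMat_ZMat_comm {j k : ι} (h : j ≠ k) : XMat ι j * ZMat ι k = ZMat ι k * XMat ι j := by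
  ext x z
  rw [ZMat, Matrix.mul_diagonal, Matrix.diagonal_mul]
  simp only [XMat, Matrix.of_apply]
  split_ifs with hz
  · subst hz
    rw [Function.update_of_ne h.symm]
    ring
  · ring

lemma neg_one_pow_fin2 (a : Fin 2) : ((-1 : ℂ)) ^ ((a + 1 : Fin 2) : ℕ) = -(-1) ^ (a : ℕ) := by
  fin_cases a <;> simp [show ((0:Fin 2)+1 : Fin 2) = 1 from rfl, show ((1:Fin 2)+1 : Fin 2) = 0 from rfl]

lemma XMat_ZMat_anticomm (k : ι) : XMat ι k * ZMat ι k = -(ZMat ι k * XMat ι k) := by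
  ext x z
  rw [Matrix.neg_apply, ZMat, Matrix.mul_diagonal, Matrix.diagonal_mul]
  simp only [XMat, Matrix.of_apply]
  split_ifs with hz
  · subst hz
    rw [Function.update_self, neg_one_pow_fin2]
    ring
  · ring

lemma XU_XU_comm (j k : ι) : XU ι j * XU ι k = XU ι k * XU ι j :=
  Units.ext (XMat_comm ι j k)

lemma ZU_ZU_comm (j k : ι) : ZU ι j * ZU ι k = ZU ι k * ZU ι j :=
  Units.ext (ZMat_comm ι j k)

lemma XU_ZU_comm {j k : ι} (h : j ≠ k) : XU ι j * ZU ι k = ZU ι k * XU ι j :=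
  Units.ext (XMat_ZMat_comm ι h)

lemma XU_ZU_anticomm (k : ι) : XU ι k * ZU ι k = -(ZU ι k * XU ι k) := by
  apply Units.ext
  rw [Units.val_neg]
  exact XMat_ZMat_anticomm ι k

/-- Any two generators of the Pauli group commute or anticommute. -/
lemma gen_rel : ∀ g ∈ ({iU ι} ∪ Set.range (XU ι) ∪ Set.range (ZU ι)),
    ∀ h ∈ ({iU ι} ∪ Set.range (XU ι) ∪ Set.range (ZU ι)),
    g * h = h * g ∨ g * h = -(h * g) := by
  rintro g ((rfl | ⟨j, rfl⟩) | ⟨j, rfl⟩) h ((rfl | ⟨k, rfl⟩) | ⟨k, rfl⟩)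
  · left; rfl
  · left; exact iU_central ι _
  · left; exact iU_central ι _
  · left; exact (iU_central ι _).symm
  · left; exact XU_XU_comm ι j k
  · rcases eq_or_ne j k with rfl | hjk
    · right; exact XU_ZU_anticomm ι j
    · left; exact XU_ZU_comm ι hjk
  · left; exact (iU_central ι _).symm
  · rcases eq_or_ne k j with rfl | hkj
    · right
      rw [eq_comm, neg_eq_iff_eq_neg, XU_ZU_anticomm ι k]
    · left; exact (XU_ZU_comm ι hkj).symm
  · left; exact ZU_ZU_comm ι j k

/-- If a unit commutes or anticommutes with all generators, it commutes or
anticommutes with every element of the Pauli group. -/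
lemma gen_conj (g : (PMat ι)ˣ)
    (hg : ∀ h ∈ ({iU ι} ∪ Set.range (XU ι) ∪ Set.range (ZU ι)),
      g * h = h * g ∨ g * h = -(h * g)) :
    ∀ q ∈ PauliGroup ι, g * q * g⁻¹ = q ∨ g * q * g⁻¹ = -q := by
  intro q hq
  induction hq using Subgroup.closure_induction with
  | mem h hh =>
      rcases hg h hh with h1 | h1
      · left; rw [h1, mul_inv_cancel_right]
      · right; rw [h1, neg_mul, mul_inv_cancel_right]
  | one => left; simp
  | mul x y hx hy ihx ihy =>
      have key : g * (x * y) * g⁻¹ = (g * x * g⁻¹) * (g * y * g⁻¹) := by group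
      rcases ihx with h1 | h1 <;> rcases ihy with h2 | h2 <;> rw [key, h1, h2]
      · left; rfl
      · right; rw [mul_neg]
      · right; rw [neg_mul]
      · left; rw [neg_mul_neg]
  | inv x hx ih =>
      have key : g * x⁻¹ * g⁻¹ = (g * x * g⁻¹)⁻¹ := by group
      rcases ih with h1 | h1
      · left; rw [key, h1]
      · right
        rw [key, h1]
        rw [inv_eq_iff_mul_eq_one, neg_mul_neg, mul_inv_cancel]

/-- Any two elements of the Pauli group commute or anticommute. -/
lemma pauli_conj {p q : (PMat ι)ˣ} (hp : p ∈ PauliGroup ι) (hq : q ∈ PauliGroup ι) :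
    p * q * p⁻¹ = q ∨ p * q * p⁻¹ = -q := by
  induction hp using Subgroup.closure_induction with
  | mem g hg => exact gen_conj ι g (gen_rel ι g hg) q hq
  | one => left; simp
  | mul x y hx hy ihx ihy =>
      have key : (x * y) * q * (x * y)⁻¹ = x * (y * q * y⁻¹) * x⁻¹ := by group
      rcases ihy with h1 | h1
      · rw [key, h1]; exact ihx
      · rw [key, h1, mul_neg, neg_mul]
        rcases ihx with h2 | h2
        · right; rw [h2]
        · left; rw [h2, neg_neg]
  | inv x hx ih =>
      have key : x⁻¹ * (x * q * x⁻¹) * x = q := by group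
      rcases ih with h1 | h1
      · left; rw [h1] at key; rw [inv_inv]; exact key
      · right
        rw [h1, mul_neg, neg_mul] at key
        rw [inv_inv]
        exact neg_eq_iff_eq_neg.mp key

/-- For a stabilizer group `S`, the normalizer of `S` in the Pauli group equals the
centralizer of `S` in the Pauli group. -/
theorem stabilizer_normalizer_eq_centralizer (n : ℕ) (S : Subgroup (PMat (Fin n))ˣ)
    (hS : IsStabilizer (Fin n) S) :
    NormIn (Fin n) S = CentIn (Fin n) S := by
  apply le_antisymm
  · intro p hp
    obtain ⟨hn, hpg⟩ := Subgroup.mem_inf.mp hp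
    refine Subgroup.mem_inf.mpr ⟨Subgroup.mem_centralizer_iff.mpr ?_, hpg⟩
    intro s hs
    have hspg : s ∈ PauliGroup (Fin n) := hS.le hs
    rcases pauli_conj (Fin n) hpg hspg with h1 | h1
    · have := h1
      rw [mul_inv_eq_iff_eq_mul] at this
      exact this.symm
    · exfalso
      have hmem : p * s * p⁻¹ ∈ S := (Subgroup.mem_normalizer_iff.mp hn s).mp hs
      rw [h1] at hmem
      have : (-1 : (PMat (Fin n))ˣ) ∈ S := by
        have := mul_mem hmem (inv_mem hs)
        rwa [neg_mul, mul_inv_cancel] at this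
      exact hS.neg_one_notMem this
  · intro p hp
    obtain ⟨hc, hpg⟩ := Subgroup.mem_inf.mp hp
    refine Subgroup.mem_inf.mpr ⟨?_, hpg⟩
    rw [Subgroup.mem_normalizer_iff]
    intro h
    constructor
    · intro hh
      have hcomm : h * p = p * h := Subgroup.mem_centralizer_iff.mp hc h hh
      have : p * h * p⁻¹ = h := by rw [← hcomm, mul_inv_cancel_right]
      rwa [this]
    · intro hh
      have hcomm : (p * h * p⁻¹) * p = p * (p * h * p⁻¹) :=
        Subgroup.mem_centralizer_iff.mp hc _ hh
      rw [inv_mul_cancel_right] at hcomm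
      have heq : h = p * h * p⁻¹ := mul_left_cancel hcomm
      exact heq ▸ hh
end
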